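/- arXiv:1810.11874 — 4 statements merged into one kernel-verified Lean document; each statement's English description precedes it below -/
import Mathlib

section
/- Let Φ ∈ ℝ^{n×d}, let W, W⋆ be 0-1 diagonal matrices with W² = W, (W⋆)² = W⋆, and y = W⋆ Φ θ⋆ + (I − W⋆) r + e. Suppose Φᵀ W Φ is invertible with smallest eigenvalue at least ψ⁻ > 0. Then the least-squares iterate θ₊ = (Φᵀ W Φ)⁻¹ Φᵀ W y satisfies ‖θ₊ − θ⋆‖ ≤ (1/ψ⁻)·( ‖Φᵀ (W − W W⋆)(Φ θ⋆ − r − e)‖ + ‖Φᵀ W W⋆ e‖ ). -/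
open Matrix

/-- Euclidean norm of a finite vector. -/
noncomputable def evNorm {m : ℕ} (v : Fin m → ℝ) : ℝ := Real.sqrt (∑ i, v i ^ 2)

lemma evNorm_eq {m : ℕ} (v : Fin m → ℝ) :
    evNorm v = ‖(WithLp.equiv 2 (Fin m → ℝ)).symm v‖ := by
  simp [evNorm, EuclideanSpace.norm_eq, sq_abs, sq]

lemma evNorm_nonneg {m : ℕ} (v : Fin m → ℝ) : 0 ≤ evNorm v :=
  Real.sqrt_nonneg _

lemma evNorm_neg {m : ℕ} (v : Fin m → ℝ) : evNorm (-v) = evNorm v := by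
  simp [evNorm]

lemma evNorm_add_le {m : ℕ} (a b : Fin m → ℝ) :
    evNorm (a + b) ≤ evNorm a + evNorm b := by
  rw [evNorm_eq, evNorm_eq, evNorm_eq]
  have : (WithLp.equiv 2 (Fin m → ℝ)).symm (a + b)
      = (WithLp.equiv 2 (Fin m → ℝ)).symm a + (WithLp.equiv 2 (Fin m → ℝ)).symm b := rfl
  rw [this]
  exact norm_add_le _ _

lemma dot_le_evNorm {m : ℕ} (a b : Fin m → ℝ) :
    a ⬝ᵥ b ≤ evNorm a * evNorm b := by
  rw [evNorm_eq, evNorm_eq]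
  have h : a ⬝ᵥ b = inner ℝ ((WithLp.equiv 2 (Fin m → ℝ)).symm a)
      ((WithLp.equiv 2 (Fin m → ℝ)).symm b) := by
    simp [dotProduct, PiLp.inner_apply, RCLike.inner_apply, mul_comm]
  rw [h]
  exact real_inner_le_norm _ _

lemma evNorm_sq {m : ℕ} (v : Fin m → ℝ) : evNorm v ^ 2 = ∑ i, v i ^ 2 := by
  rw [evNorm, Real.sq_sqrt]
  positivity

/-- One-round error bound for iterative trimmed least squares: the parameter error
is controlled by the cross term on misselected samples and the noise term, divided
by the smallest eigenvalue of the selected Gram matrix. -/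
theorem itlm_error_bound
    (n d : ℕ) (Φ : Matrix (Fin n) (Fin d) ℝ)
    (w wstar : Fin n → ℝ)
    (W Wstar : Matrix (Fin n) (Fin n) ℝ)
    (hW : W = Matrix.diagonal w) (hWstar : Wstar = Matrix.diagonal wstar)
    (hw01 : ∀ i, w i = 0 ∨ w i = 1) (hwstar01 : ∀ i, wstar i = 0 ∨ wstar i = 1)
    (hWidem : W * W = W) (hWstaridem : Wstar * Wstar = Wstar)
    (θstar : Fin d → ℝ) (r e y : Fin n → ℝ)
    (hy : y = Wstar.mulVec (Φ.mulVec θstar) + (1 - Wstar).mulVec r + e)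
    (ψ : ℝ) (hψpos : 0 < ψ)
    (hψ : ∀ v : Fin d → ℝ, ψ * ∑ i, v i ^ 2 ≤ v ⬝ᵥ (Φᵀ * W * Φ).mulVec v)
    (hinv : IsUnit (Φᵀ * W * Φ).det)
    (θplus : Fin d → ℝ)
    (hθplus : θplus = (Φᵀ * W * Φ)⁻¹.mulVec (Φᵀ.mulVec (W.mulVec y))) :
    evNorm (θplus - θstar)
      ≤ (1 / ψ) *
        (evNorm (Φᵀ.mulVec ((W - W * Wstar).mulVec (Φ.mulVec θstar - r - e)))
          + evNorm (Φᵀ.mulVec ((W * Wstar).mulVec e))) := by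
  set A := Φᵀ * W * Φ with hA
  set u := Φᵀ.mulVec ((W - W * Wstar).mulVec (Φ.mulVec θstar - r - e)) with hu
  set v := Φᵀ.mulVec ((W * Wstar).mulVec e) with hv
  set z := θplus - θstar with hz
  -- key algebraic identity
  have hAz : A.mulVec z = v - u := by
    have h1 : A.mulVec θplus = Φᵀ.mulVec (W.mulVec y) := by
      rw [hθplus, Matrix.mulVec_mulVec, Matrix.mul_nonsing_inv _ hinv, Matrix.one_mulVec]
    have h2 : A.mulVec θstar = Φᵀ.mulVec (W.mulVec (Φ.mulVec θstar)) := by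
      rw [hA, ← Matrix.mulVec_mulVec, ← Matrix.mulVec_mulVec]
    have hWy : W.mulVec y = (W * Wstar).mulVec (Φ.mulVec θstar)
        + (W - W * Wstar).mulVec r + W.mulVec e := by
      rw [hy]
      simp only [Matrix.mulVec_add, Matrix.mulVec_mulVec, mul_sub, mul_one, mul_assoc]
      rw [Matrix.mul_assoc]
    have hkey : W.mulVec y - W.mulVec (Φ.mulVec θstar)
        = (W * Wstar).mulVec e - (W - W * Wstar).mulVec (Φ.mulVec θstar - r - e) := by
      rw [hWy]
      have hsub : (W - W * Wstar).mulVec (Φ.mulVec θstar - r - e)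
          = (W.mulVec (Φ.mulVec θstar) - (W * Wstar).mulVec (Φ.mulVec θstar))
            - ((W.mulVec r) - (W * Wstar).mulVec r)
            - ((W.mulVec e) - (W * Wstar).mulVec e) := by
        rw [Matrix.mulVec_sub, Matrix.mulVec_sub, Matrix.sub_mulVec, Matrix.sub_mulVec,
          Matrix.sub_mulVec]
      rw [hsub]
      simp only [Matrix.sub_mulVec]
      abel
    rw [hz, Matrix.mulVec_sub, h1, h2, ← Matrix.mulVec_sub, hkey, Matrix.mulVec_sub,
      hu, hv]
  -- norms
  have hNz : 0 ≤ evNorm z := evNorm_nonneg z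
  have hS : 0 ≤ evNorm u + evNorm v := add_nonneg (evNorm_nonneg u) (evNorm_nonneg v)
  have hvu : evNorm (v - u) ≤ evNorm u + evNorm v := by
    have : v - u = -u + v := by abel
    rw [this]
    calc evNorm (-u + v) ≤ evNorm (-u) + evNorm v := evNorm_add_le _ _
    _ = evNorm u + evNorm v := by rw [evNorm_neg]
  have hchain : ψ * evNorm z ^ 2 ≤ evNorm z * (evNorm u + evNorm v) := by
    calc ψ * evNorm z ^ 2 = ψ * ∑ i, z i ^ 2 := by rw [evNorm_sq]
    _ ≤ z ⬝ᵥ A.mulVec z := hψ z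
    _ = z ⬝ᵥ (v - u) := by rw [hAz]
    _ ≤ evNorm z * evNorm (v - u) := dot_le_evNorm _ _
    _ ≤ evNorm z * (evNorm u + evNorm v) := by
        exact mul_le_mul_of_nonneg_left hvu hNz
  rcases eq_or_lt_of_le hNz with h0 | h0
  · rw [← h0]
    positivity
  · have h1 : ψ * evNorm z ≤ evNorm u + evNorm v := by nlinarith [hchain, h0]
    calc evNorm z = (1 / ψ) * (ψ * evNorm z) := by field_simp
    _ ≤ (1 / ψ) * (evNorm u + evNorm v) := by
        apply mul_le_mul_of_nonneg_left h1
        positivity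
end

section
/- Let A ∈ ℝ^{n×d}, let P be an n×n permutation matrix, let N be an n×n diagonal matrix with diagonal entries in {−1, +1}, and let D be a 0-1 diagonal matrix with D² = D and Tr(D) = k. Then the largest singular value of Aᵀ D P N A is at most max over 0-1 diagonal matrices D′ with trace k of σ_max(Aᵀ D′ A), where σ_max denotes the largest eigenvalue. -/
open Matrix

lemma quad_form_diag (n d : ℕ) (A : Matrix (Fin n) (Fin d) ℝ)
    (dg' : Fin n → ℝ) (w : Fin d → ℝ) :
    w ⬝ᵥ (Aᵀ * Matrix.diagonal dg' * A).mulVec w = ∑ i, dg' i * (A.mulVec w i)^2 := by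
  rw [← Matrix.mulVec_mulVec, ← Matrix.mulVec_mulVec, Matrix.dotProduct_mulVec,
    Matrix.vecMul_transpose]
  simp only [dotProduct, Matrix.mulVec_diagonal]
  exact Finset.sum_congr rfl fun i _ => by ring

lemma bilin_form_eq (n d : ℕ) (A : Matrix (Fin n) (Fin d) ℝ)
    (π : Equiv.Perm (Fin n)) (ν dg : Fin n → ℝ) (u v : Fin d → ℝ) :
    u ⬝ᵥ (Aᵀ * Matrix.diagonal dg * (Matrix.of fun i j => if j = π i then (1:ℝ) else 0)
        * Matrix.diagonal ν * A).mulVec v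
      = ∑ i, dg i * (ν (π i) * ((A *ᵥ u) i * (A *ᵥ v) (π i))) := by
  have hPv : ∀ x : Fin n → ℝ,
      (Matrix.of fun i j => if j = π i then (1:ℝ) else 0) *ᵥ x = fun i => x (π i) := by
    intro x; funext i; simp [Matrix.mulVec, dotProduct]
  rw [← Matrix.mulVec_mulVec, ← Matrix.mulVec_mulVec, ← Matrix.mulVec_mulVec,
    ← Matrix.mulVec_mulVec, Matrix.dotProduct_mulVec, Matrix.vecMul_transpose, hPv]
  simp only [dotProduct, Matrix.mulVec_diagonal]
  exact Finset.sum_congr rfl fun i _ => by ring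

/-- Spectral bound for the arbitrary-corruption analysis: the top singular value
of `AᵀDPNA` (with `P` a permutation matrix, `N` a ±1 diagonal matrix, `D` a 0-1
diagonal matrix of trace `k`) is at most the maximum over trace-`k` 0-1 diagonal
matrices `D'` of the largest eigenvalue of `AᵀD'A`. -/
theorem perm_sign_spectral_bound
    (n d : ℕ) (A : Matrix (Fin n) (Fin d) ℝ)
    (π : Equiv.Perm (Fin n)) (P : Matrix (Fin n) (Fin n) ℝ)
    (hP : P = Matrix.of fun i j => if j = π i then (1 : ℝ) else 0)
    (ν : Fin n → ℝ) (N : Matrix (Fin n) (Fin n) ℝ)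
    (hN : N = Matrix.diagonal ν) (hν : ∀ i, ν i = 1 ∨ ν i = -1)
    (dg : Fin n → ℝ) (D : Matrix (Fin n) (Fin n) ℝ)
    (hD : D = Matrix.diagonal dg) (hd01 : ∀ i, dg i = 0 ∨ dg i = 1)
    (hDidem : D * D = D) (k : ℕ) (htr : Matrix.trace D = (k : ℝ))
    (β : ℝ)
    (hβ : ∀ dg' : Fin n → ℝ, (∀ i, dg' i = 0 ∨ dg' i = 1) →
      Matrix.trace (Matrix.diagonal dg') = (k : ℝ) →
      ∀ w : Fin d → ℝ, ∑ i, w i ^ 2 = 1 →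
        w ⬝ᵥ (Aᵀ * Matrix.diagonal dg' * A).mulVec w ≤ β) :
    ∀ u v : Fin d → ℝ, ∑ i, u i ^ 2 = 1 → ∑ i, v i ^ 2 = 1 →
      u ⬝ᵥ (Aᵀ * D * P * N * A).mulVec v ≤ β := by
  intro u v hu hv
  subst hP hN hD
  set ut := A *ᵥ u with hut
  set vt := A *ᵥ v with hvt
  -- the second diagonal family
  set dg2 : Fin n → ℝ := fun j => dg (π.symm j) with hdg2
  have hd01' : ∀ i, dg2 i = 0 ∨ dg2 i = 1 := fun i => hd01 _
  have htr2 : Matrix.trace (Matrix.diagonal dg2) = (k : ℝ) := by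
    rw [Matrix.trace_diagonal]
    rw [Matrix.trace_diagonal] at htr
    rw [← htr]
    exact Equiv.sum_comp π.symm dg
  have hβu : ∑ i, dg i * (ut i)^2 ≤ β := by
    rw [← quad_form_diag]; exact hβ dg hd01 (by rwa [Matrix.trace_diagonal] at htr ⊢) u hu
  have hβv : ∑ i, dg i * (vt (π i))^2 ≤ β := by
    have : ∑ i, dg i * (vt (π i))^2 = ∑ j, dg2 j * (vt j)^2 := by
      rw [← Equiv.sum_comp π (fun j => dg2 j * (vt j)^2)]
      exact Finset.sum_congr rfl fun i _ => by simp [hdg2]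
    rw [this, ← quad_form_diag]
    exact hβ dg2 hd01' htr2 v hv
  rw [bilin_form_eq]
  have key : ∑ i, dg i * (ν (π i) * (ut i * vt (π i)))
      ≤ ∑ i, dg i * ((ut i)^2 + (vt (π i))^2) / 2 := by
    apply Finset.sum_le_sum
    intro i _
    have h1 : ν (π i) * (ut i * vt (π i)) ≤ ((ut i)^2 + (vt (π i))^2) / 2 := by
      rcases hν (π i) with h | h <;> rw [h] <;>
        nlinarith [sq_nonneg (ut i - vt (π i)), sq_nonneg (ut i + vt (π i))]
    have h0 : 0 ≤ dg i := by rcases hd01 i with h | h <;> rw [h] <;> norm_num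
    calc dg i * (ν (π i) * (ut i * vt (π i)))
        ≤ dg i * (((ut i)^2 + (vt (π i))^2) / 2) := by
          exact mul_le_mul_of_nonneg_left h1 h0
      _ = dg i * ((ut i)^2 + (vt (π i))^2) / 2 := by ring
  calc ∑ i, dg i * (ν (π i) * (ut i * vt (π i)))
      ≤ ∑ i, dg i * ((ut i)^2 + (vt (π i))^2) / 2 := key
    _ = ((∑ i, dg i * (ut i)^2) + ∑ i, dg i * (vt (π i))^2) / 2 := by
        rw [← Finset.sum_add_distrib, ← Finset.sum_div]
        congr 1
        exact Finset.sum_congr rfl fun i _ => by ring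
    _ ≤ (β + β) / 2 := by linarith
    _ = β := by ring
end

section
/- Fix 0 < α < α⋆ ≤ 1 and 0 < Δ ≤ 1. Suppose we observe n independent real random variables: α⋆n of them drawn from N(0, Δ²) (the 'clean' samples) and (1−α⋆)n drawn from N(0, 1) (the 'bad' samples). Let S be the set of indices of the ⌊αn⌋ samples with smallest absolute value. Then there exist constants c, C (depending only on α, α⋆) such that with probability at least 1 − n^{−C}, the number of bad samples in S is at most c · max{Δ(1−α⋆)n, log n}. -/
open MeasureTheory ProbabilityTheory Real Set Filter

lemma my_tend : Tendsto (fun x : ℝ => -rexp (-x ^ 2 / 2)) atTop (nhds 0) := by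
  rw [← neg_zero]
  apply Filter.Tendsto.neg
  apply Real.tendsto_exp_atBot.comp
  have h1 : Tendsto (fun x : ℝ => x ^ 2) atTop atTop := tendsto_pow_atTop (by norm_num)
  have h2 : Tendsto (fun x : ℝ => -x ^ 2) atTop atBot := tendsto_neg_atBot_iff.mpr h1
  exact h2.atBot_div_const (by norm_num)

lemma my_int_tail (c : ℝ) : ∫ x in Set.Ioi c, x * rexp (-x ^ 2 / 2) = rexp (-c ^ 2 / 2) := by
  have h : ∀ x ∈ Set.Ioi c, HasDerivAt (fun x : ℝ => -rexp (-x ^ 2 / 2))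
      (x * rexp (-x ^ 2 / 2)) x := by
    intro x _
    have h1 : HasDerivAt (fun x : ℝ => -x ^ 2 / 2) (-x) x := by
      have := ((hasDerivAt_pow 2 x).neg).div_const 2
      exact this.congr_deriv (by ring)
    have h2 := (h1.exp).neg
    exact h2.congr_deriv (by ring)
  have hint : IntegrableOn (fun x : ℝ => x * rexp (-x ^ 2 / 2)) (Set.Ioi c) := by
    have := integrable_mul_exp_neg_mul_sq (b := (1:ℝ)/2) (by norm_num)
    have h2 : (fun x : ℝ => x * rexp (-x ^ 2 / 2)) = fun x : ℝ => x * rexp (-(1/2) * x ^ 2) := by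
      funext x; ring_nf
    rw [h2]
    exact this.integrableOn
  have := integral_Ioi_of_hasDerivAt_of_tendsto
    (f := fun x : ℝ => -rexp (-x ^ 2 / 2)) (f' := fun x : ℝ => x * rexp (-x ^ 2 / 2))
    (Continuous.continuousWithinAt (by fun_prop)) h hint my_tend
  rw [this]; ring


lemma my_pdf_eq (x : ℝ) : gaussianPDFReal 0 1 x = (√(2 * π))⁻¹ * rexp (-x ^ 2 / 2) := by
  simp [gaussianPDFReal]

lemma my_sqrt_ge_two : (2:ℝ) ≤ √(2 * π) := by
  have h4 : (4:ℝ) ≤ 2 * π := by nlinarith [Real.pi_gt_three]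
  nlinarith [Real.sq_sqrt (show (0:ℝ) ≤ 2 * π by linarith), Real.sqrt_nonneg (2 * π)]

lemma my_gauss_ici {c : ℝ} (hc : 1 ≤ c) :
    (gaussianReal 0 1) (Set.Ici c) ≤ ENNReal.ofReal (rexp (-c ^ 2 / 2)) := by
  rw [gaussianReal_apply_eq_integral 0 one_ne_zero]
  apply ENNReal.ofReal_le_ofReal
  rw [MeasureTheory.integral_Ici_eq_integral_Ioi]
  rw [← my_int_tail c]
  apply setIntegral_mono_on
  · exact (integrable_gaussianPDFReal 0 1).restrict
  · have := integrable_mul_exp_neg_mul_sq (b := (1:ℝ)/2) (by norm_num)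
    have h2 : (fun x : ℝ => x * rexp (-x ^ 2 / 2)) = fun x : ℝ => x * rexp (-(1/2) * x ^ 2) := by
      funext x; ring_nf
    rw [h2]; exact this.integrableOn
  · exact measurableSet_Ioi
  · intro x hx
    rw [my_pdf_eq]
    have hx1 : (1:ℝ) ≤ x := le_trans hc (le_of_lt hx)
    have h1 : (√(2 * π))⁻¹ ≤ 1 := by
      rw [inv_le_one_iff₀]; right; linarith [my_sqrt_ge_two]
    have := Real.exp_pos (-x ^ 2 / 2)
    nlinarith

lemma my_gauss_tail {c : ℝ} (hc : 1 ≤ c) :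
    (gaussianReal 0 1) {x | c ≤ |x|} ≤ ENNReal.ofReal (2 * rexp (-c ^ 2 / 2)) := by
  have hsub : {x : ℝ | c ≤ |x|} ⊆ Set.Iic (-c) ∪ Set.Ici c := by
    intro x hx
    simp only [mem_setOf_eq] at hx
    rcases le_abs.mp hx with h | h
    · exact Or.inr h
    · exact Or.inl (by simp only [mem_Iic]; linarith)
  have hsym : (gaussianReal 0 1) (Set.Iic (-c)) = (gaussianReal 0 1) (Set.Ici c) := by
    have hnn : (⟨(-1:ℝ)^2, sq_nonneg _⟩ : NNReal) * 1 = 1 := by ext; push_cast; norm_num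
    have hmap : (gaussianReal 0 1).map (fun x => (-1 : ℝ) * x) = gaussianReal 0 1 := by
      rw [gaussianReal_map_const_mul (-1 : ℝ), show (-1:ℝ) * 0 = 0 by norm_num]; congr 1
    conv_lhs => rw [← hmap]
    rw [Measure.map_apply (by fun_prop) measurableSet_Iic]
    congr 1
    ext x
    simp only [mem_preimage, mem_Iic, mem_Ici, neg_mul, one_mul]
    constructor <;> intro <;> linarith
  calc (gaussianReal 0 1) {x | c ≤ |x|} ≤ (gaussianReal 0 1) (Set.Iic (-c) ∪ Set.Ici c) :=
        measure_mono hsub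
    _ ≤ (gaussianReal 0 1) (Set.Iic (-c)) + (gaussianReal 0 1) (Set.Ici c) := measure_union_le _ _
    _ ≤ ENNReal.ofReal (rexp (-c ^ 2 / 2)) + ENNReal.ofReal (rexp (-c ^ 2 / 2)) := by
        rw [hsym]; exact add_le_add (my_gauss_ici hc) (my_gauss_ici hc)
    _ = ENNReal.ofReal (2 * rexp (-c ^ 2 / 2)) := by
        rw [← ENNReal.ofReal_add (by positivity) (by positivity)]; ring_nf

lemma my_gauss_ball {δ : ℝ} (hδ : 0 ≤ δ) :
    (gaussianReal 0 1) {x | |x| ≤ δ} ≤ ENNReal.ofReal δ := by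
  have hset : {x : ℝ | |x| ≤ δ} = Set.Icc (-δ) δ := by ext x; simp only [Set.mem_setOf_eq, Set.mem_Icc, abs_le]
  rw [hset, gaussianReal_apply_eq_integral 0 one_ne_zero]
  apply ENNReal.ofReal_le_ofReal
  have hconst : IntegrableOn (fun _ : ℝ => (1/2 : ℝ)) (Set.Icc (-δ) δ) := by
    apply (integrableOn_const_iff (C := (1/2:ℝ))).mpr
    right
    rw [Real.volume_Icc]
    exact ENNReal.ofReal_lt_top
  calc ∫ x in Set.Icc (-δ) δ, gaussianPDFReal 0 1 x
      ≤ ∫ _x in Set.Icc (-δ) δ, (1/2 : ℝ) := by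
        apply setIntegral_mono_on
        · exact (integrable_gaussianPDFReal 0 1).restrict
        · exact hconst
        · exact measurableSet_Icc
        · intro x _
          rw [my_pdf_eq]
          have h1 : (√(2 * π))⁻¹ ≤ 1/2 := by
            rw [inv_le_comm₀ (by linarith [my_sqrt_ge_two]) (by norm_num)]
            simpa using my_sqrt_ge_two
          have h2 : rexp (-x ^ 2 / 2) ≤ 1 := Real.exp_le_one_iff.mpr (by nlinarith)
          nlinarith [Real.exp_pos (-x ^ 2 / 2)]
    _ ≤ δ := by
        rw [setIntegral_const, Real.volume_real_Icc_of_le (by linarith)]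
        simp only [smul_eq_mul]
        linarith

lemma my_chernoff {Ω : Type} [MeasurableSpace Ω] {μ : Measure Ω} [IsProbabilityMeasure μ]
    {n : ℕ} {X : Fin n → Ω → ℝ} (hX : ∀ i, Measurable (X i))
    (hind : iIndepFun X μ)
    (A : Fin n → Set ℝ) (hA : ∀ i, MeasurableSet (A i))
    (s : Finset (Fin n)) {p : ℝ} (hp0 : 0 ≤ p)
    (hp : ∀ i ∈ s, (μ (X i ⁻¹' A i)).toReal ≤ p)
    {l t : ℝ} (hl : 0 ≤ l) :
    (μ {ω | t ≤ ∑ i ∈ s, (A i).indicator (fun _ => (1:ℝ)) (X i ω)}).toReal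
      ≤ rexp (s.card * p * (rexp l - 1) - l * t) := by
  classical
  set Y : Fin n → Ω → ℝ := fun i => (A i).indicator (fun _ => 1) ∘ X i with hY
  have hYmeas : ∀ i, Measurable (Y i) := fun i =>
    (measurable_const.indicator (hA i)).comp (hX i)
  have hindY : iIndepFun Y μ :=
    hind.comp _ (fun i => measurable_const.indicator (hA i))
  have hY01 : ∀ i ω, Y i ω = 0 ∨ Y i ω = 1 := by
    intro i ω
    by_cases h : X i ω ∈ A i <;> simp [hY, Set.indicator, h]
  have hset : {ω | t ≤ ∑ i ∈ s, (A i).indicator (fun _ => (1:ℝ)) (X i ω)}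
      = {ω | t ≤ (∑ i ∈ s, Y i) ω} := by
    ext ω; rw [Set.mem_setOf_eq, Set.mem_setOf_eq, Finset.sum_apply]; rfl
  rw [hset]
  have hsummeas : Measurable (∑ i ∈ s, Y i) := by
    rw [show (∑ i ∈ s, Y i) = fun ω => ∑ i ∈ s, Y i ω from funext fun ω => Finset.sum_apply ..]
    exact Finset.measurable_sum s (fun i _ => hYmeas i)
  have hint : Integrable (fun ω => rexp (l * (∑ i ∈ s, Y i) ω)) μ := by
    apply Integrable.mono' (integrable_const (rexp (l * s.card)))
    · exact ((hsummeas.const_mul l).exp).aestronglyMeasurable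
    · apply ae_of_all
      intro ω
      rw [Real.norm_eq_abs, abs_of_pos (Real.exp_pos _), Real.exp_le_exp]
      apply mul_le_mul_of_nonneg_left _ hl
      rw [Finset.sum_apply]
      calc ∑ i ∈ s, Y i ω ≤ ∑ i ∈ s, 1 := by
            apply Finset.sum_le_sum
            intro i _
            rcases hY01 i ω with h | h <;> rw [h] <;> norm_num
        _ = (s.card : ℝ) := by simp
  have hmain := measure_ge_le_exp_mul_mgf (μ := μ) (X := ∑ i ∈ s, Y i) t hl hint
  have hmgf : mgf (∑ i ∈ s, Y i) μ l = ∏ i ∈ s, mgf (Y i) μ l := hindY.mgf_sum hYmeas s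
  have hmgfi : ∀ i ∈ s, mgf (Y i) μ l ≤ rexp (p * (rexp l - 1)) := by
    intro i hi
    have hcalc : (fun ω => rexp (l * Y i ω))
        = fun ω => (X i ⁻¹' A i).indicator (fun _ => rexp l - 1) ω + 1 := by
      funext ω
      by_cases h : X i ω ∈ A i <;> simp [hY, Set.indicator, h]
    have hmeasset : MeasurableSet (X i ⁻¹' A i) := (hX i) (hA i)
    have hmgf_eq : mgf (Y i) μ l = (μ (X i ⁻¹' A i)).toReal * (rexp l - 1) + 1 := by
      rw [mgf, hcalc]
      rw [integral_add ((integrable_const _).indicator hmeasset) (integrable_const 1)]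
      rw [integral_indicator_const _ hmeasset]
      simp [smul_eq_mul, Measure.real]
    rw [hmgf_eq]
    have hq := hp i hi
    have hel : 0 ≤ rexp l - 1 := by linarith [Real.one_le_exp hl]
    have h1 : (μ (X i ⁻¹' A i)).toReal * (rexp l - 1) + 1 ≤ p * (rexp l - 1) + 1 := by
      nlinarith
    refine h1.trans ?_
    linarith [Real.add_one_le_exp (p * (rexp l - 1))]
  have hprod : ∏ i ∈ s, mgf (Y i) μ l ≤ rexp (s.card * (p * (rexp l - 1))) := by
    calc ∏ i ∈ s, mgf (Y i) μ l ≤ ∏ _i ∈ s, rexp (p * (rexp l - 1)) := by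
          apply Finset.prod_le_prod
          · exact fun i _ => mgf_nonneg
          · exact hmgfi
      _ = rexp (p * (rexp l - 1)) ^ s.card := Finset.prod_const _
      _ = rexp (s.card * (p * (rexp l - 1))) := by rw [← Real.exp_nat_mul]
  calc (μ {ω | t ≤ (∑ i ∈ s, Y i) ω}).toReal
      ≤ rexp (-l * t) * mgf (∑ i ∈ s, Y i) μ l := hmain
    _ ≤ rexp (-l * t) * rexp (s.card * (p * (rexp l - 1))) := by
        apply mul_le_mul_of_nonneg_left _ (le_of_lt (Real.exp_pos _))
        rw [hmgf]; exact hprod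
    _ = rexp (s.card * p * (rexp l - 1) - l * t) := by
        rw [← Real.exp_add]; ring_nf

set_option maxHeartbeats 1000000 in
/-- Trimming selects few bad samples: with `α⋆n` clean samples `N(0,Δ²)` and
`(1−α⋆)n` bad samples `N(0,1)`, the set `S` of the `⌊αn⌋` samples of smallest
absolute value contains, with probability at least `1 − n^{−C}`, at most
`c·max{Δ(1−α⋆)n, log n}` bad samples. -/
theorem trimming_few_bad_samples
    (α αstar : ℝ) (hα : 0 < α) (hαα : α < αstar) (hαstar : αstar ≤ 1) :
    ∃ c C : ℝ, 0 < c ∧ 0 < C ∧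
      ∀ (Δ : ℝ), 0 < Δ → Δ ≤ 1 →
      ∀ (n : ℕ) (Ω : Type) (_ : MeasurableSpace Ω) (μ : Measure Ω)
        (_ : IsProbabilityMeasure μ)
        (X : Fin n → Ω → ℝ) (clean : Finset (Fin n)),
        (clean.card : ℝ) = αstar * n →
        (∀ i, Measurable (X i)) →
        iIndepFun X μ →
        (∀ i ∈ clean, μ.map (X i) = gaussianReal 0 (Real.toNNReal (Δ ^ 2))) →
        (∀ i ∉ clean, μ.map (X i) = gaussianReal 0 1) →
        ∀ S : Ω → Finset (Fin n),
          (∀ ω, (S ω).card = ⌊α * n⌋₊) →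
          (∀ ω, ∀ i ∈ S ω, ∀ j ∉ S ω, |X i ω| ≤ |X j ω|) →
          ENNReal.ofReal (1 - (n : ℝ) ^ (-C)) ≤
            μ {ω | (((S ω).filter (fun i => i ∉ clean)).card : ℝ)
                    ≤ c * max (Δ * (1 - αstar) * n) (Real.log n)} := by
  classical
  -- abstract constants
  have key : ∃ (a l1 ε c2 : ℝ), a = αstar - α ∧ 0 < a ∧ a ≤ 1 ∧ 0 ≤ l1 ∧ 0 < ε ∧ 1 ≤ c2 ∧
      ε * rexp l1 = a ∧ l1 * a = 20 ∧ 2 * rexp (-c2 ^ 2 / 2) ≤ ε := by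
    have ha : 0 < αstar - α := by linarith
    have ha1 : αstar - α ≤ 1 := by linarith
    set a : ℝ := αstar - α
    set l1 : ℝ := 20 / a with hl1_def
    have hl1 : 0 < l1 := by positivity
    set ε : ℝ := a * rexp (-l1) with hε_def
    have hε : 0 < ε := by positivity
    have hε1 : ε ≤ 1 := by
      have h1 : rexp (-l1) ≤ 1 := Real.exp_le_one_iff.mpr (by linarith)
      nlinarith
    have hsε : 0 < Real.sqrt ε := Real.sqrt_pos.mpr hε
    have hsε1 : Real.sqrt ε ≤ 1 := by
      rw [show (1:ℝ) = Real.sqrt 1 by simp]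
      exact Real.sqrt_le_sqrt hε1
    set c2 : ℝ := 2 / Real.sqrt ε with hc2_def
    have hc2 : 2 ≤ c2 := by
      rw [hc2_def, le_div_iff₀ hsε]; linarith
    refine ⟨a, l1, ε, c2, rfl, ha, ha1, hl1.le, hε, by linarith, ?_, ?_, ?_⟩
    · rw [hε_def, Real.exp_neg]
      field_simp
    · rw [hl1_def]; field_simp
    · have hsq : c2 ^ 2 = 4 / ε := by
        rw [hc2_def, div_pow, Real.sq_sqrt hε.le]; norm_num
      rw [hsq]
      have h1 : rexp (-(4 / ε) / 2) = rexp (-(2/ε)) := by ring_nf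
      rw [h1]
      have h2 : (2/ε) ≤ rexp (2/ε) := by linarith [Real.add_one_le_exp (2/ε)]
      rw [Real.exp_neg]
      have h3 : (rexp (2/ε))⁻¹ ≤ (2/ε)⁻¹ := inv_anti₀ (by positivity) h2
      have h4 : (2/ε)⁻¹ = ε/2 := by field_simp
      nlinarith
  obtain ⟨a, l1, ε, c2, ha_def, ha, ha1, hl1, hε, hc21, hεe, hl1a, hc2tail⟩ := key
  refine ⟨2 * c2 + 3, 1, by linarith, one_pos, ?_⟩
  intro Δ hΔ hΔ1 n Ω mΩ μ hprob X clean hcard hXmeas hind hclean hbad S hScard hSmin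
  by_cases hn0 : n = 0
  · subst hn0
    have h0 : ((0:ℕ):ℝ) ^ (-(1:ℝ)) = 0 := by
      rw [Nat.cast_zero, Real.zero_rpow (by norm_num)]
    rw [h0]
    have hset : ∀ ω : Ω, (((S ω).filter (fun i => i ∉ clean)).card : ℝ)
        ≤ (2 * c2 + 3) * max (Δ * (1 - αstar) * ((0:ℕ):ℝ)) (Real.log ((0:ℕ):ℝ)) := by
      intro ω
      have h2 : ((S ω).filter (fun i => i ∉ clean)).card = 0 := by
        have := Finset.card_le_univ ((S ω).filter (fun i => i ∉ clean))
        simpa using this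
      rw [h2]
      simp [Real.log_zero]
    have : {ω : Ω | (((S ω).filter (fun i => i ∉ clean)).card : ℝ)
        ≤ (2 * c2 + 3) * max (Δ * (1 - αstar) * ((0:ℕ):ℝ)) (Real.log ((0:ℕ):ℝ))} = Set.univ :=
      Set.eq_univ_of_forall hset
    rw [this]
    simp
  by_cases hn1 : n = 1
  · subst hn1
    have h0 : ((1:ℕ):ℝ) ^ (-(1:ℝ)) = 1 := by
      rw [Nat.cast_one, Real.one_rpow]
    rw [h0]
    simp
  have hn2 : 2 ≤ n := by omega
  have hnR : (2:ℝ) ≤ n := by exact_mod_cast hn2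
  have hnR0 : (0:ℝ) < n := by linarith
  set δ : ℝ := c2 * Δ with hδ_def
  have hδpos : 0 < δ := by positivity
  set M : ℝ := max (Δ * (1 - αstar) * n) (Real.log n) with hM_def
  have hMlog : Real.log n ≤ M := le_max_right _ _
  have hM1 : Δ * (1 - αstar) * n ≤ M := le_max_left _ _
  have hM0 : 0 ≤ M := le_trans (Real.log_nonneg (by linarith)) hMlog
  have hB1m : MeasurableSet {x : ℝ | δ ≤ |x|} :=
    (isClosed_le continuous_const continuous_abs).measurableSet
  have hB2m : MeasurableSet {x : ℝ | |x| ≤ δ} :=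
    (isClosed_le continuous_abs continuous_const).measurableSet
  set E1 : Set Ω := {ω | a * n ≤ ∑ i ∈ clean,
      Set.indicator {x : ℝ | δ ≤ |x|} (fun _ => (1:ℝ)) (X i ω)} with hE1_def
  set E2 : Set Ω := {ω | (2 * c2 + 3) * M ≤ ∑ i ∈ cleanᶜ,
      Set.indicator {x : ℝ | |x| ≤ δ} (fun _ => (1:ℝ)) (X i ω)} with hE2_def
  -- probability bounds for single samples
  have hclean_prob : ∀ i ∈ clean, (μ (X i ⁻¹' {x : ℝ | δ ≤ |x|})).toReal ≤ ε := by
    intro i hi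
    have hmap : μ (X i ⁻¹' {x : ℝ | δ ≤ |x|}) = (μ.map (X i)) {x : ℝ | δ ≤ |x|} :=
      (Measure.map_apply (hXmeas i) hB1m).symm
    have hscale : (gaussianReal 0 1).map (fun x => Δ * x)
        = gaussianReal 0 (Real.toNNReal (Δ^2)) := by
      rw [gaussianReal_map_const_mul Δ]
      congr 1
      · ring
      · ext; simp [Real.coe_toNNReal _ (sq_nonneg Δ)]
    have hpre : (fun x => Δ * x) ⁻¹' {x : ℝ | δ ≤ |x|} = {y : ℝ | c2 ≤ |y|} := by
      ext y
      simp only [Set.mem_preimage, Set.mem_setOf_eq, abs_mul, abs_of_pos hΔ, hδ_def]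
      constructor
      · intro h; nlinarith [abs_nonneg y]
      · intro h; nlinarith [abs_nonneg y]
    have hle : μ (X i ⁻¹' {x : ℝ | δ ≤ |x|}) ≤ ENNReal.ofReal ε := by
      rw [hmap, hclean i hi, ← hscale,
        Measure.map_apply (by fun_prop) hB1m, hpre]
      exact le_trans (my_gauss_tail hc21) (ENNReal.ofReal_le_ofReal hc2tail)
    calc (μ (X i ⁻¹' {x : ℝ | δ ≤ |x|})).toReal ≤ (ENNReal.ofReal ε).toReal :=
          ENNReal.toReal_mono ENNReal.ofReal_ne_top hle
      _ = ε := ENNReal.toReal_ofReal hε.le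
  have hbad_prob : ∀ i ∈ cleanᶜ, (μ (X i ⁻¹' {x : ℝ | |x| ≤ δ})).toReal ≤ δ := by
    intro i hi
    have hi' : i ∉ clean := Finset.mem_compl.mp hi
    have hmap : μ (X i ⁻¹' {x : ℝ | |x| ≤ δ}) = (μ.map (X i)) {x : ℝ | |x| ≤ δ} :=
      (Measure.map_apply (hXmeas i) hB2m).symm
    have hle : μ (X i ⁻¹' {x : ℝ | |x| ≤ δ}) ≤ ENNReal.ofReal δ := by
      rw [hmap, hbad i hi']
      exact my_gauss_ball hδpos.le
    calc (μ (X i ⁻¹' {x : ℝ | |x| ≤ δ})).toReal ≤ (ENNReal.ofReal δ).toReal :=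
          ENNReal.toReal_mono ENNReal.ofReal_ne_top hle
      _ = δ := ENNReal.toReal_ofReal hδpos.le
  -- Chernoff bounds
  have hE1bound : μ E1 ≤ ENNReal.ofReal (rexp (-(19 * n))) := by
    have h := my_chernoff hXmeas hind (fun _ => {x : ℝ | δ ≤ |x|}) (fun _ => hB1m)
      clean hε.le hclean_prob (l := l1) (t := a * n) hl1
    have hexp : (clean.card : ℝ) * ε * (rexp l1 - 1) - l1 * (a * n) ≤ -(19 * n) := by
      have h3 : (clean.card : ℝ) ≤ n := by rw [hcard]; nlinarith
      have h4 : (0:ℝ) ≤ clean.card := Nat.cast_nonneg _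
      have h6 : 0 ≤ rexp l1 - 1 := by linarith [Real.one_le_exp hl1]
      have h7 : (clean.card : ℝ) * ε * (rexp l1 - 1) ≤ n * (ε * rexp l1) := by
        nlinarith
      rw [hεe] at h7
      have h8 : l1 * (a * n) = 20 * n := by rw [← mul_assoc, hl1a]
      nlinarith
    refine (ENNReal.le_ofReal_iff_toReal_le (measure_ne_top μ E1) (Real.exp_pos _).le).mpr ?_
    exact le_trans h (Real.exp_le_exp.mpr hexp)
  have hE2bound : μ E2 ≤ ENNReal.ofReal (rexp (-(3 * M))) := by
    have h := my_chernoff hXmeas hind (fun _ => {x : ℝ | |x| ≤ δ}) (fun _ => hB2m)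
      cleanᶜ hδpos.le hbad_prob (l := 1) (t := (2 * c2 + 3) * M) zero_le_one
    have hcardc : ((cleanᶜ : Finset (Fin n)).card : ℝ) = (1 - αstar) * n := by
      rw [Finset.card_compl, Nat.cast_sub (by simpa using Finset.card_le_univ clean), hcard]
      simp
      ring
    have hexp : ((cleanᶜ : Finset (Fin n)).card : ℝ) * δ * (rexp 1 - 1)
        - 1 * ((2 * c2 + 3) * M) ≤ -(3 * M) := by
      rw [hcardc]
      have he : rexp 1 - 1 ≤ 2 := by
        have := Real.exp_one_lt_d9
        linarith
      have he0 : 0 ≤ rexp 1 - 1 := by linarith [Real.one_le_exp zero_le_one]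
      have h2 : 0 ≤ (1 - αstar) * (n:ℝ) := by
        rw [← hcardc]
        exact Nat.cast_nonneg _
      have h1 : (1 - αstar) * n * δ = c2 * (Δ * (1 - αstar) * n) := by
        rw [hδ_def]; ring
      have h3 : (1 - αstar) * n * δ * (rexp 1 - 1) ≤ c2 * M * 2 := by
        have h5 : c2 * (Δ * (1 - αstar) * n) ≤ c2 * M := by nlinarith
        have h7 : c2 * (Δ * (1 - αstar) * n) * (rexp 1 - 1) ≤ c2 * M * (rexp 1 - 1) :=
          mul_le_mul_of_nonneg_right h5 he0
        have h8 : c2 * M * (rexp 1 - 1) ≤ c2 * M * 2 :=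
          mul_le_mul_of_nonneg_left he (mul_nonneg (by linarith) hM0)
        calc (1 - αstar) * n * δ * (rexp 1 - 1)
            = c2 * (Δ * (1 - αstar) * n) * (rexp 1 - 1) := by rw [h1]
          _ ≤ c2 * M * (rexp 1 - 1) := h7
          _ ≤ c2 * M * 2 := h8
      nlinarith
    refine (ENNReal.le_ofReal_iff_toReal_le (measure_ne_top μ E2) (Real.exp_pos _).le).mpr ?_
    exact le_trans h (Real.exp_le_exp.mpr hexp)
  -- counting identity
  have hcount : ∀ (s : Finset (Fin n)) (B : Set ℝ) (ω : Ω),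
      ((s.filter (fun i => X i ω ∈ B)).card : ℝ)
        = ∑ i ∈ s, B.indicator (fun _ => (1:ℝ)) (X i ω) := by
    intro s B ω
    rw [Finset.card_filter]
    push_cast
    refine Finset.sum_congr rfl fun i _ => ?_
    by_cases h : X i ω ∈ B <;> simp [Set.indicator, h]
  -- deterministic inclusion
  have hincl : (E1 ∪ E2)ᶜ ⊆ {ω | (((S ω).filter (fun i => i ∉ clean)).card : ℝ)
      ≤ (2 * c2 + 3) * M} := by
    intro ω hω
    simp only [Set.mem_compl_iff, Set.mem_union, not_or, hE1_def, hE2_def,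
      Set.mem_setOf_eq, not_le] at hω
    obtain ⟨h1, h2⟩ := hω
    rw [← hcount clean {x : ℝ | δ ≤ |x|} ω] at h1
    rw [← hcount cleanᶜ {x : ℝ | |x| ≤ δ} ω] at h2
    set Aset : Finset (Fin n) := clean.filter (fun i => |X i ω| < δ) with hAset_def
    have hsplit : (clean.filter (fun i => X i ω ∈ {x : ℝ | δ ≤ |x|})).card + Aset.card
        = clean.card := by
      have hunion : (clean.filter (fun i => X i ω ∈ {x : ℝ | δ ≤ |x|})) ∪ Aset = clean := by
        ext i
        simp only [Finset.mem_union, Finset.mem_filter, hAset_def, Set.mem_setOf_eq]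
        constructor
        · rintro (⟨h, _⟩ | ⟨h, _⟩) <;> exact h
        · intro h
          rcases le_or_gt δ |X i ω| with hle | hlt
          · exact Or.inl ⟨h, hle⟩
          · exact Or.inr ⟨h, hlt⟩
      have hdisj : Disjoint (clean.filter (fun i => X i ω ∈ {x : ℝ | δ ≤ |x|})) Aset := by
        rw [Finset.disjoint_left]
        intro i hi1 hi2
        rw [Finset.mem_filter] at hi1
        rw [hAset_def, Finset.mem_filter] at hi2
        have := hi1.2
        rw [Set.mem_setOf_eq] at this
        linarith [hi2.2]
      have hcu := Finset.card_union_of_disjoint hdisj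
      rw [hunion] at hcu
      exact hcu.symm
    have hScard' : ((S ω).card : ℝ) ≤ α * n := by
      rw [hScard ω]
      exact Nat.floor_le (by positivity)
    have hAbig : (S ω).card < Aset.card := by
      have hcast := congrArg (fun k : ℕ => (k : ℝ)) hsplit
      push_cast at hcast
      have hlt : ((S ω).card : ℝ) < (Aset.card : ℝ) := by
        have hαn : αstar * n - a * n = α * n := by rw [ha_def]; ring
        rw [hcard] at hcast
        nlinarith
      exact_mod_cast hlt
    have hSsmall : ∀ i ∈ S ω, |X i ω| < δ := by
      intro i hi
      by_cases hex : ∃ j ∈ Aset, j ∉ S ω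
      · obtain ⟨j, hjA, hjS⟩ := hex
        exact lt_of_le_of_lt (hSmin ω i hi j hjS) ((Finset.mem_filter.mp hjA).2)
      · push_neg at hex
        have hsub : Aset ⊆ S ω := fun j hj => hex j hj
        exact absurd (Finset.card_le_card hsub) (by omega)
    have hsub2 : (S ω).filter (fun i => i ∉ clean)
        ⊆ cleanᶜ.filter (fun i => X i ω ∈ {x : ℝ | |x| ≤ δ}) := by
      intro i hi
      rw [Finset.mem_filter] at hi ⊢
      refine ⟨Finset.mem_compl.mpr hi.2, ?_⟩
      exact (hSsmall i hi.1).le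
    rw [Set.mem_setOf_eq]
    calc (((S ω).filter (fun i => i ∉ clean)).card : ℝ)
        ≤ ((cleanᶜ.filter (fun i => X i ω ∈ {x : ℝ | |x| ≤ δ})).card : ℝ) := by
          exact_mod_cast Finset.card_le_card hsub2
      _ ≤ (2 * c2 + 3) * M := h2.le
  -- measurability
  have hE1m : MeasurableSet E1 := by
    apply measurableSet_le measurable_const
    apply Finset.measurable_sum
    intro i _
    exact (measurable_const.indicator hB1m).comp (hXmeas i)
  have hE2m : MeasurableSet E2 := by
    apply measurableSet_le measurable_const
    apply Finset.measurable_sum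
    intro i _
    exact (measurable_const.indicator hB2m).comp (hXmeas i)
  -- union bound
  have hsum : μ (E1 ∪ E2) ≤ ENNReal.ofReal ((n:ℝ)⁻¹) := by
    calc μ (E1 ∪ E2) ≤ μ E1 + μ E2 := measure_union_le _ _
      _ ≤ ENNReal.ofReal (rexp (-(19 * n))) + ENNReal.ofReal (rexp (-(3 * M))) :=
          add_le_add hE1bound hE2bound
      _ = ENNReal.ofReal (rexp (-(19 * n)) + rexp (-(3 * M))) :=
          (ENNReal.ofReal_add (by positivity) (by positivity)).symm
      _ ≤ ENNReal.ofReal ((n:ℝ)⁻¹) := by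
          apply ENNReal.ofReal_le_ofReal
          have hinv : (0:ℝ) < (n:ℝ)⁻¹ := by positivity
          have hb1 : rexp (-(19 * n)) ≤ (n:ℝ)⁻¹ / 2 := by
            have hgr : 2 * (n:ℝ) ≤ rexp (19 * n) := by
              nlinarith [Real.add_one_le_exp (19 * (n:ℝ))]
            rw [Real.exp_neg]
            have h3 := inv_anti₀ (by positivity : (0:ℝ) < 2 * n) hgr
            have h4 : ((2:ℝ) * n)⁻¹ = (n:ℝ)⁻¹ / 2 := by
              rw [mul_inv]; ring
            linarith [h4 ▸ h3]
          have hb2 : rexp (-(3 * M)) ≤ (n:ℝ)⁻¹ / 2 := by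
            have h0 : rexp (-(3 * M)) ≤ rexp (-(3 * Real.log n)) := by
              apply Real.exp_le_exp.mpr
              nlinarith
            have h1 : rexp (-(3 * Real.log n)) = ((n:ℝ)⁻¹) ^ (3:ℕ) := by
              rw [show -(3 * Real.log n) = (3:ℕ) * (-Real.log n) by push_cast; ring,
                Real.exp_nat_mul, Real.exp_neg, Real.exp_log hnR0]
            have h2 : ((n:ℝ)⁻¹) ^ (3:ℕ) ≤ (n:ℝ)⁻¹ / 2 := by
              have h5 : (n:ℝ)⁻¹ ≤ 1/2 := by
                calc (n:ℝ)⁻¹ ≤ (2:ℝ)⁻¹ := inv_anti₀ (by norm_num) hnR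
                  _ = 1/2 := by norm_num
              have hx0 : (0:ℝ) ≤ (n:ℝ)⁻¹ := by positivity
              have hsq : (n:ℝ)⁻¹ * (n:ℝ)⁻¹ ≤ 1/4 := by nlinarith
              nlinarith [mul_le_mul_of_nonneg_left hsq hx0]
            linarith
          linarith
  have hcompl : ENNReal.ofReal (1 - (n:ℝ)⁻¹) ≤ μ ((E1 ∪ E2)ᶜ) := by
    rw [prob_compl_eq_one_sub (hE1m.union hE2m)]
    rw [ENNReal.ofReal_sub _ (by positivity), ENNReal.ofReal_one]
    exact tsub_le_tsub_left hsum 1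
  have hfinal := le_trans hcompl (measure_mono hincl)
  rw [show ((n:ℝ) ^ (-(1:ℝ))) = (n:ℝ)⁻¹ from Real.rpow_neg_one _]
  exact hfinal
end

section
/- Let x₁, …, xₙ be i.i.d. N(0, σ²) random variables and fix 0 < α < 1. Let T(α) = ∑ of the ⌊αn⌋ smallest values among x₁², …, xₙ². Then there is a constant c(α, σ) > 0 such that with probability at least 1 − e^{−c n}, T(α) ≥ c(α, σ) · n for all sufficiently large n. -/
open MeasureTheory ProbabilityTheory
open scoped ENNReal NNReal

lemma my_choose_le_two_pow (n m : ℕ) : n.choose m ≤ 2 ^ n := by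
  rcases le_or_gt m n with h | h
  · calc n.choose m ≤ ∑ k ∈ Finset.range (n + 1), n.choose k :=
        Finset.single_le_sum (fun _ _ => Nat.zero_le _)
          (Finset.mem_range.mpr (Nat.lt_succ_of_le h))
    _ = 2 ^ n := Nat.sum_range_choose n
  · simp [Nat.choose_eq_zero_of_lt h]

lemma my_gauss_ball_le (σ δ : ℝ) (hσ : 0 < σ) (hδ : 0 ≤ δ) :
    gaussianReal 0 (Real.toNNReal (σ ^ 2)) (Set.Ioo (-δ) δ) ≤ ENNReal.ofReal (δ / σ) := by
  have hσ2 : (0:ℝ) ≤ σ ^ 2 := sq_nonneg σ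
  have hv : Real.toNNReal (σ ^ 2) ≠ 0 := by
    simp only [ne_eq, Real.toNNReal_eq_zero, not_le]
    positivity
  have hvcoe : ((Real.toNNReal (σ ^ 2)) : ℝ) = σ ^ 2 := Real.coe_toNNReal _ hσ2
  rw [gaussianReal_apply_eq_integral _ hv]
  apply ENNReal.ofReal_le_ofReal
  have hCpos : (0:ℝ) < Real.sqrt (2 * Real.pi * σ ^ 2) := by
    apply Real.sqrt_pos.mpr; positivity
  have hpdf_le : ∀ y : ℝ, gaussianPDFReal 0 (Real.toNNReal (σ ^ 2)) y ≤
      (Real.sqrt (2 * Real.pi * σ ^ 2))⁻¹ := by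
    intro y
    rw [gaussianPDFReal, hvcoe]
    have h1 : Real.exp (-(y - 0) ^ 2 / (2 * (σ ^ 2))) ≤ 1 := by
      rw [Real.exp_le_one_iff]
      apply div_nonpos_of_nonpos_of_nonneg
      · simp [sq_nonneg]
      · positivity
    calc (Real.sqrt (2 * Real.pi * σ ^ 2))⁻¹ * Real.exp (-(y - 0) ^ 2 / (2 * σ ^ 2))
        ≤ (Real.sqrt (2 * Real.pi * σ ^ 2))⁻¹ * 1 := by
          apply mul_le_mul_of_nonneg_left _ (by positivity)
          convert h1 using 3
      _ = (Real.sqrt (2 * Real.pi * σ ^ 2))⁻¹ := mul_one _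
  have hInt1 : IntegrableOn (gaussianPDFReal 0 (Real.toNNReal (σ ^ 2))) (Set.Ioo (-δ) δ) :=
    (integrable_gaussianPDFReal _ _).integrableOn
  have hInt2 : IntegrableOn (fun _ : ℝ => (Real.sqrt (2 * Real.pi * σ ^ 2))⁻¹)
      (Set.Ioo (-δ) δ) := integrableOn_const measure_Ioo_lt_top.ne
  calc ∫ y in Set.Ioo (-δ) δ, gaussianPDFReal 0 (Real.toNNReal (σ ^ 2)) y
      ≤ ∫ _ in Set.Ioo (-δ) δ, (Real.sqrt (2 * Real.pi * σ ^ 2))⁻¹ :=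
        setIntegral_mono_on hInt1 hInt2 measurableSet_Ioo (fun y _ => hpdf_le y)
    _ = (volume (Set.Ioo (-δ) δ)).toReal * (Real.sqrt (2 * Real.pi * σ ^ 2))⁻¹ := by
        rw [setIntegral_const]; rfl
    _ ≤ (2 * δ) * (2 * σ)⁻¹ := by
        apply mul_le_mul
        · rw [Real.volume_Ioo, ENNReal.toReal_ofReal (by linarith)]; linarith
        · apply inv_anti₀ (by positivity)
          have h2 : Real.sqrt (2 * Real.pi * σ ^ 2) = Real.sqrt (2 * Real.pi) * σ := by
            rw [Real.sqrt_mul (by positivity), Real.sqrt_sq hσ.le]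
          rw [h2]
          have hpi : (2:ℝ) ≤ Real.sqrt (2 * Real.pi) := by
            nlinarith [Real.sq_sqrt (show (0:ℝ) ≤ 2 * Real.pi by positivity),
              Real.sqrt_nonneg (2 * Real.pi), Real.pi_gt_three]
          nlinarith
        · positivity
        · positivity
    _ = δ / σ := by field_simp

/-- Concentration of the trimmed sum of squared Gaussians: for i.i.d. `N(0,σ²)`
samples, the sum of the `⌊αn⌋` smallest squares is at least `c·n` with probability
at least `1 − e^{−c'n}` for all large `n`.  (The trimmed sum is `≥ c·n` iff every
subset of cardinality `⌊αn⌋` has sum of squares `≥ c·n`.) -/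
theorem trimmed_gaussian_squares_lower_bound
    (σ α : ℝ) (hσ : 0 < σ) (hα0 : 0 < α) (hα1 : α < 1) :
    ∃ c c' : ℝ, 0 < c ∧ 0 < c' ∧
      ∃ N : ℕ, ∀ n : ℕ, N ≤ n →
        ∀ (Ω : Type) (_ : MeasurableSpace Ω) (μ : Measure Ω)
          (_ : IsProbabilityMeasure μ) (x : Fin n → Ω → ℝ),
          (∀ i, Measurable (x i)) →
          iIndepFun x μ →
          (∀ i, μ.map (x i) = gaussianReal 0 (Real.toNNReal (σ ^ 2))) →
          ENNReal.ofReal (1 - Real.exp (-c' * n)) ≤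
            μ {ω | ∀ s : Finset (Fin n), s.card = ⌊α * n⌋₊ →
                    c * n ≤ ∑ i ∈ s, (x i ω) ^ 2} := by
  set K : ℕ := ⌈4 / α⌉₊ + 1 with hK
  set r : ℝ := Real.exp (-1) / 2 with hrdef
  have hr0 : 0 < r := by positivity
  have hr1 : r ≤ 1 := by
    rw [hrdef]
    have := Real.exp_le_one_iff.mpr (by norm_num : (-1:ℝ) ≤ 0)
    linarith
  set q : ℝ := r ^ K with hqdef
  have hq0 : 0 < q := pow_pos hr0 _
  have hq1 : q ≤ 1 := pow_le_one₀ hr0.le hr1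
  set δ : ℝ := σ * q with hδdef
  have hδ0 : 0 < δ := mul_pos hσ hq0
  refine ⟨δ ^ 2 * α / 4, 1, by positivity, one_pos, ⌈2 / α⌉₊ + 1, ?_⟩
  intro n hn Ω mΩ μ hμ x hmx hind hmap
  set c : ℝ := δ ^ 2 * α / 4 with hcdef
  -- basic size facts
  have hn2 : (2:ℝ) < α * n := by
    have h1 : (2 / α : ℝ) ≤ ⌈2 / α⌉₊ := Nat.le_ceil _
    have h2 : ((⌈2 / α⌉₊ + 1 : ℕ) : ℝ) ≤ (n : ℝ) := by exact_mod_cast hn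
    push_cast at h2
    have : 2 / α < (n : ℝ) := by linarith
    calc (2:ℝ) = α * (2 / α) := by field_simp
      _ < α * n := by apply mul_lt_mul_of_pos_left this hα0
  set k : ℕ := ⌊α * n⌋₊ with hkdef
  set m : ℕ := ⌊α * n / 4⌋₊ + 1 with hmdef
  have hk2 : α * n / 2 ≤ (k : ℝ) := by
    have := Nat.sub_one_lt_floor (α * n)
    rw [← hkdef] at this
    linarith
  have hm4 : α * n / 4 < (m : ℝ) := by
    rw [hmdef]
    push_cast
    exact Nat.lt_floor_add_one _
  -- the per-coordinate small-ball sets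
  set A : Fin n → Set Ω := fun i => (x i) ⁻¹' Set.Ioo (-δ) δ with hAdef
  have hA : ∀ i, μ (A i) ≤ ENNReal.ofReal q := by
    intro i
    have h1 : μ (A i) = (μ.map (x i)) (Set.Ioo (-δ) δ) := by
      rw [Measure.map_apply (hmx i) measurableSet_Ioo]
    rw [h1, hmap i]
    have h2 := my_gauss_ball_le σ δ hσ hδ0.le
    have h3 : δ / σ = q := by rw [hδdef]; field_simp
    rwa [h3] at h2
  -- measurability of the event
  set E : Set Ω := {ω | ∀ s : Finset (Fin n), s.card = k →
      c * n ≤ ∑ i ∈ s, (x i ω) ^ 2} with hEdef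
  have hE : MeasurableSet E := by
    have : E = ⋂ (s : Finset (Fin n)), ⋂ (_ : s.card = k),
        {ω | c * n ≤ ∑ i ∈ s, (x i ω) ^ 2} := by
      ext ω; simp [hEdef]
    rw [this]
    refine MeasurableSet.iInter fun s => MeasurableSet.iInter fun _ => ?_
    exact measurableSet_le measurable_const
      (Finset.measurable_sum _ fun i _ => (hmx i).pow_const 2)
  -- the complement is covered by the union over m-subsets of small-ball intersections
  have hsub : Eᶜ ⊆ ⋃ S ∈ Finset.powersetCard m (Finset.univ : Finset (Fin n)),
      ⋂ i ∈ S, A i := by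
    intro ω hω
    simp only [hEdef, Set.mem_compl_iff, Set.mem_setOf_eq, not_forall] at hω
    obtain ⟨s, hscard, hsum⟩ := hω
    push_neg at hsum
    set g : Finset (Fin n) := s.filter (fun i => (x i ω) ^ 2 < δ ^ 2) with hgdef
    have hgs : g ⊆ s := Finset.filter_subset _ _
    have hgcard : α * n / 4 < (g.card : ℝ) := by
      have hsd : ∀ i ∈ s \ g, δ ^ 2 ≤ (x i ω) ^ 2 := by
        intro i hi
        rw [Finset.mem_sdiff, hgdef, Finset.mem_filter] at hi
        push_neg at hi
        exact hi.2 hi.1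
      have h1 : ((s \ g).card : ℝ) * δ ^ 2 ≤ ∑ i ∈ s, (x i ω) ^ 2 := by
        calc ((s \ g).card : ℝ) * δ ^ 2 = ∑ _i ∈ s \ g, δ ^ 2 := by
              rw [Finset.sum_const, nsmul_eq_mul]
          _ ≤ ∑ i ∈ s \ g, (x i ω) ^ 2 := Finset.sum_le_sum hsd
          _ ≤ ∑ i ∈ s, (x i ω) ^ 2 :=
              Finset.sum_le_sum_of_subset_of_nonneg (Finset.sdiff_subset)
                (fun i _ _ => sq_nonneg _)
      have h2 : ((s \ g).card : ℝ) < α * n / 4 := by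
        have hδ2 : (0:ℝ) < δ ^ 2 := by positivity
        have : ((s \ g).card : ℝ) * δ ^ 2 < c * n := lt_of_le_of_lt h1 hsum
        rw [hcdef] at this
        nlinarith
      have h3 : ((s \ g).card : ℝ) = (k : ℝ) - (g.card : ℝ) := by
        rw [Finset.card_sdiff_of_subset hgs, hscard]
        have : g.card ≤ k := hscard ▸ Finset.card_le_card hgs
        push_cast [Nat.cast_sub this]
        ring
      rw [h3] at h2
      linarith
    have hmg : m ≤ g.card := by
      have h1 : (⌊α * n / 4⌋₊ : ℝ) < (g.card : ℝ) :=
        lt_of_le_of_lt (Nat.floor_le (by positivity)) hgcard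
      have h2 : ⌊α * n / 4⌋₊ < g.card := by exact_mod_cast h1
      omega
    obtain ⟨S, hSg, hScard⟩ := Finset.exists_subset_card_eq hmg
    refine Set.mem_iUnion.mpr ⟨S, Set.mem_iUnion.mpr
      ⟨Finset.mem_powersetCard_univ.mpr hScard, ?_⟩⟩
    refine Set.mem_iInter.mpr fun i => Set.mem_iInter.mpr fun hi => ?_
    have hig := hSg hi
    rw [hgdef, Finset.mem_filter] at hig
    have habs := abs_lt_of_sq_lt_sq' hig.2 hδ0.le
    exact ⟨habs.1, habs.2⟩
  -- measure of the complement
  have hcomp : μ Eᶜ ≤ ENNReal.ofReal (Real.exp (-1 * n)) := by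
    have h1 : μ Eᶜ ≤ ∑ S ∈ Finset.powersetCard m (Finset.univ : Finset (Fin n)),
        μ (⋂ i ∈ S, A i) :=
      le_trans (measure_mono hsub) (measure_biUnion_finset_le _ _)
    have h2 : ∀ S ∈ Finset.powersetCard m (Finset.univ : Finset (Fin n)),
        μ (⋂ i ∈ S, A i) ≤ (ENNReal.ofReal q) ^ m := by
      intro S hS
      have hprod : μ (⋂ i ∈ S, A i) = ∏ i ∈ S, μ (A i) := by
        apply hind.meas_biInter
        intro i _
        exact ⟨Set.Ioo (-δ) δ, measurableSet_Ioo, rfl⟩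
      rw [hprod]
      have hcard : S.card = m := Finset.mem_powersetCard_univ.mp hS
      calc ∏ i ∈ S, μ (A i) ≤ ∏ _i ∈ S, ENNReal.ofReal q :=
            Finset.prod_le_prod' fun i _ => hA i
        _ = (ENNReal.ofReal q) ^ m := by rw [Finset.prod_const, hcard]
    have h3 : μ Eᶜ ≤ (n.choose m : ℕ) * (ENNReal.ofReal q) ^ m := by
      calc μ Eᶜ ≤ ∑ S ∈ Finset.powersetCard m (Finset.univ : Finset (Fin n)),
          μ (⋂ i ∈ S, A i) := h1
        _ ≤ (Finset.powersetCard m (Finset.univ : Finset (Fin n))).card •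
            (ENNReal.ofReal q) ^ m := Finset.sum_le_card_nsmul _ _ _ h2
        _ = (n.choose m : ℕ) * (ENNReal.ofReal q) ^ m := by
            rw [Finset.card_powersetCard, Finset.card_univ, Fintype.card_fin,
              nsmul_eq_mul]
    have h4 : ((n.choose m : ℕ) : ℝ≥0∞) * (ENNReal.ofReal q) ^ m ≤
        ENNReal.ofReal ((2:ℝ) ^ n * q ^ m) := by
      rw [ENNReal.ofReal_mul (by positivity), ← ENNReal.ofReal_pow hq0.le]
      apply mul_le_mul_left
      have : ((n.choose m : ℕ) : ℝ≥0∞) ≤ ((2 ^ n : ℕ) : ℝ≥0∞) := by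
        exact_mod_cast my_choose_le_two_pow n m
      refine le_trans this (le_of_eq ?_)
      rw [← ENNReal.ofReal_natCast]
      congr 1
      push_cast
      ring
    have h5 : (2:ℝ) ^ n * q ^ m ≤ Real.exp (-1 * n) := by
      have hKm : n ≤ K * m := by
        have hK4 : (4 / α : ℝ) ≤ (K : ℝ) := by
          rw [hK]; push_cast
          have := Nat.le_ceil (4 / α)
          linarith
        have h4α : (0:ℝ) < 4 / α := by positivity
        have hlt : (n : ℝ) < (K : ℝ) * (m : ℝ) := by
          calc (n : ℝ) = (4 / α) * (α * n / 4) := by field_simp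
            _ ≤ (K : ℝ) * (α * n / 4) := by
                apply mul_le_mul_of_nonneg_right hK4
                positivity
            _ < (K : ℝ) * (m : ℝ) := by
                apply mul_lt_mul_of_pos_left hm4
                linarith
        have hcast : (n : ℝ) ≤ ((K * m : ℕ) : ℝ) := by
          rw [Nat.cast_mul]; exact hlt.le
        exact_mod_cast hcast
      have hqm : q ^ m = r ^ (K * m) := by rw [hqdef, ← pow_mul]
      have hrle : r ^ (K * m) ≤ r ^ n := pow_le_pow_of_le_one hr0.le hr1 hKm
      calc (2:ℝ) ^ n * q ^ m ≤ (2:ℝ) ^ n * r ^ n := by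
            rw [hqm]
            exact mul_le_mul_of_nonneg_left hrle (by positivity)
        _ = (2 * r) ^ n := by rw [mul_pow]
        _ = Real.exp (-1) ^ n := by rw [hrdef]; ring_nf
        _ = Real.exp (-1 * n) := by
            rw [← Real.exp_nat_mul]; ring_nf
    calc μ Eᶜ ≤ ((n.choose m : ℕ) : ℝ≥0∞) * (ENNReal.ofReal q) ^ m := h3
      _ ≤ ENNReal.ofReal ((2:ℝ) ^ n * q ^ m) := h4
      _ ≤ ENNReal.ofReal (Real.exp (-1 * n)) := ENNReal.ofReal_le_ofReal h5
  -- conclude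
  have hsum1 : μ E + μ Eᶜ = 1 := by
    rw [measure_add_measure_compl hE]
    exact measure_univ
  have hgoal : ENNReal.ofReal (1 - Real.exp (-1 * n)) ≤ μ E := by
    rw [ENNReal.ofReal_sub _ (Real.exp_nonneg _), ENNReal.ofReal_one]
    rw [tsub_le_iff_right]
    calc (1 : ℝ≥0∞) = μ E + μ Eᶜ := hsum1.symm
      _ ≤ μ E + ENNReal.ofReal (Real.exp (-1 * n)) := add_le_add_right hcomp _
  exact hgoal
end
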